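/- arXiv:2102.07728 — 2 statements merged into one kernel-verified Lean document; each statement's English description precedes it below -/
import Mathlib

section
/- A finite semigroup S is nilpotent (there exists k > 0 with S^k = {0}) if and only if it satisfies the equation x^ω y = y x^ω = x^ω for all x, y ∈ S. -/
/-!
If every product of `k` factors is `0`, then an idempotent `e = e^k` is `0`, so `x^ω y = 0 = x^ω`.
Conversely, the equation forces every idempotent to be `0`. Among the `|S| + 1` prefixes of a
product of `|S| + 1` factors two coincide, so some prefix `a` satisfies `a w = a` for a nonempty
factor `w`. The right stabilizer of `a` is a finite subsemigroup, hence contains an idempotent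
`e`, and `a = a e = a 0 = 0`; the whole product is then `0`.
-/

/-- `spow x n` is `x ^ n` for `n ≥ 1` (with the junk value `x` at `n = 0`). -/
def spow {S : Type*} [Mul S] (x : S) : ℕ → S
  | 0 => x
  | 1 => x
  | n + 2 => spow x (n + 1) * x

/-- `n` is the idempotent power of `x`: the least positive integer such that
`x ^ n` is idempotent. -/
def IsIdemPow {S : Type*} [Mul S] (x : S) (n : ℕ) : Prop :=
  0 < n ∧ spow x n * spow x n = spow x n ∧
    ∀ m, 0 < m → spow x m * spow x m = spow x m → n ≤ m

theorem List.exists_lt_foldl_take_eq {α β : Type*} [Fintype β] (f : β → α → β) (b : β)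
    (l : List α) (hl : Fintype.card β ≤ l.length) :
    ∃ i j, i < j ∧ j ≤ l.length ∧ (l.take i).foldl f b = (l.take j).foldl f b := by
  obtain ⟨i, j, hne, heq⟩ := Fintype.exists_ne_map_eq_of_card_lt
    (fun i : Fin (l.length + 1) => (l.take i).foldl f b) (by simpa using Nat.lt_succ_of_le hl)
  rcases Fin.lt_or_lt_of_ne hne with h | h
  · exact ⟨i, j, h, Nat.lt_succ_iff.mp j.2, heq⟩
  · exact ⟨j, i, h, Nat.lt_succ_iff.mp i.2, heq.symm⟩

section Semigroup

variable {S : Type*} [Semigroup S]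

theorem exists_mul_eq_self_of_foldl_take_eq (x : S) (l : List S) {i j : ℕ} (hij : i < j)
    (hj : j ≤ l.length) (h : (l.take i).foldl (· * ·) x = (l.take j).foldl (· * ·) x) :
    ∃ w, (l.take i).foldl (· * ·) x * w = (l.take i).foldl (· * ·) x := by
  obtain ⟨d, rfl⟩ := Nat.exists_eq_add_of_lt hij
  obtain ⟨c, r, hcr⟩ := List.exists_cons_of_length_pos (l := l.drop i) <| by
    rw [List.length_drop]; omega
  refine ⟨(r.take d).foldl (· * ·) c, ?_⟩
  calc (l.take i).foldl (· * ·) x * (r.take d).foldl (· * ·) c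
      = ((l.drop i).take (d + 1)).foldl (· * ·) ((l.take i).foldl (· * ·) x) := by
        rw [hcr, List.take_succ_cons, List.foldl_cons, List.foldl_assoc]
    _ = (l.take (i + d + 1)).foldl (· * ·) x := by
        rw [add_assoc, List.take_add (i := i), List.foldl_append]
    _ = (l.take i).foldl (· * ·) x := h.symm

theorem exists_isIdempotentElem_mul_eq_self [Finite S] {a w : S} (h : a * w = a) :
    ∃ e, IsIdempotentElem e ∧ a * e = a := by
  let : TopologicalSpace S := ⊥
  have : DiscreteTopology S := ⟨rfl⟩
  -- the Ellis–Nakamura lemma, applied to the right stabilizer of `a` in the discrete topology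
  obtain ⟨e, hae, he⟩ := exists_idempotent_in_compact_subsemigroup
    (fun _ => continuous_of_discreteTopology) {t | a * t = a} ⟨w, h⟩ (Set.toFinite _).isCompact
    fun s (hs : a * s = a) t (ht : a * t = a) => show a * (s * t) = a by rw [← mul_assoc, hs, ht]
  exact ⟨e, he, hae⟩

theorem IsIdempotentElem.foldl_replicate {e : S} (he : IsIdempotentElem e) (m : ℕ) :
    (List.replicate m e).foldl (· * ·) e = e := by
  induction m with
  | zero => rfl
  | succ m ih => rw [List.replicate_succ, List.foldl_cons, he.eq, ih]

theorem IsIdempotentElem.isIdemPow_one {e : S} (he : IsIdempotentElem e) : IsIdemPow e 1 :=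
  ⟨one_pos, he, fun _ hm _ => hm⟩

end Semigroup

/-- A finite semigroup with zero is nilpotent (some `S^k = {0}`) iff it
satisfies `x^ω y = y x^ω = x^ω` for all `x, y`. -/
theorem nilpotent_iff_equation {S : Type*} [Semigroup S] [Fintype S]
    (z : S) (hz : ∀ x : S, z * x = z ∧ x * z = z) :
    (∃ k, 0 < k ∧ ∀ (x : S) (l : List S), l.length + 1 = k →
        l.foldl (· * ·) x = z) ↔
      (∀ (x y : S) (n : ℕ), IsIdemPow x n →
        spow x n * y = spow x n ∧ y * spow x n = spow x n) := by
  constructor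
  · rintro ⟨k, hk, hnil⟩ x y n ⟨-, hidem, -⟩
    have hxz : spow x n = z := by
      simpa only [IsIdempotentElem.foldl_replicate hidem] using
        hnil (spow x n) (List.replicate (k - 1) (spow x n)) <| by
          rw [List.length_replicate]; omega
    simpa only [hxz] using hz y
  · intro heq
    have idem_eq_zero : ∀ e : S, IsIdempotentElem e → e = z := fun e he =>
      (heq e z 1 he.isIdemPow_one).2.symm.trans (hz e).1
    refine ⟨Fintype.card S + 1, Nat.succ_pos _, fun x l hl => ?_⟩
    obtain ⟨i, j, hij, hj, hpre⟩ := l.exists_lt_foldl_take_eq (· * ·) x (by omega)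
    obtain ⟨w, hw⟩ := exists_mul_eq_self_of_foldl_take_eq x l hij hj hpre
    obtain ⟨e, he, hae⟩ := exists_isIdempotentElem_mul_eq_self hw
    have hpre_zero : (l.take j).foldl (· * ·) x = z := by
      rw [← hpre, ← hae, idem_eq_zero e he, (hz _).2]
    rw [← List.take_append_drop j l, List.foldl_append, hpre_zero]
    exact List.foldl_fixed' (fun b => (hz b).1) _
end

section
/- LSG = SG as varieties of finite semigroups: a finite semigroup S satisfies x^{ω+1} y x^ω = x^ω y x^{ω+1} for all x, y ∈ S if and only if every local monoid eSe (for e idempotent in S) satisfies this equation. -/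
lemma spow_one {S : Type*} [Mul S] (x : S) : spow x 1 = x := rfl

lemma spow_succ' {S : Type*} [Mul S] (x : S) (n : ℕ) (hn : 1 ≤ n) :
    spow x (n + 1) = spow x n * x := by
  match n, hn with
  | k + 1, _ => rfl

lemma spow_add {S : Type*} [Semigroup S] (x : S) (a b : ℕ) (ha : 1 ≤ a) (hb : 1 ≤ b) :
    spow x (a + b) = spow x a * spow x b := by
  induction b with
  | zero => omega
  | succ b ih =>
    rcases Nat.eq_or_lt_of_le hb with hb' | hb'
    · simp [← hb', spow_succ' x a ha, spow_one]
    · have hb1 : 1 ≤ b := by omega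
      have : a + (b + 1) = (a + b) + 1 := by omega
      rw [this, spow_succ' x (a + b) (by omega), ih hb1, spow_succ' x b hb1, mul_assoc]

lemma spow_mul_idem {S : Type*} [Semigroup S] (z : S) (m : ℕ) (hm : 1 ≤ m)
    (h : spow z m * spow z m = spow z m) :
    ∀ k, 1 ≤ k → spow z (k * m) = spow z m := by
  intro k hk
  induction k with
  | zero => omega
  | succ k ih =>
    rcases Nat.eq_or_lt_of_le hk with hk' | hk'
    · simp [← hk']
    · have hk1 : 1 ≤ k := by omega
      have : (k + 1) * m = k * m + m := by ring
      rw [this, spow_add z (k * m) m (by nlinarith) hm, ih hk1, h]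

/-- `LSG = SG`: a finite semigroup satisfies the SG equation iff all of its
local monoids `eSe` (for `e` idempotent) do. -/
theorem lsg_eq_sg {S : Type*} [Semigroup S] [Fintype S] :
    (∀ (x y : S) (n : ℕ), IsIdemPow x n →
        spow x (n + 1) * y * spow x n = spow x n * y * spow x (n + 1)) ↔
      (∀ e : S, e * e = e →
        ∀ x y : S, (∃ s, x = e * s * e) → (∃ s, y = e * s * e) →
          ∀ n : ℕ, IsIdemPow x n →
            spow x (n + 1) * y * spow x n = spow x n * y * spow x (n + 1)) := by
  constructor
  · intro h e _ x y _ _ n hn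
    exact h x y n hn
  · intro h x y n hn
    classical
    obtain ⟨hn0, he, _⟩ := hn
    set e := spow x n with hedef
    -- reduction lemma: exponents ≥ n can be reduced by n
    have red : ∀ a, 1 ≤ a → spow x (n + n + a) = spow x (n + a) := by
      intro a ha
      have h1 : n + n + a = n + (n + a) := by omega
      rw [h1, spow_add x n (n + a) hn0 (by omega), spow_add x n a hn0 ha, ← mul_assoc,
        ← hedef, he, ← spow_add x n a hn0 ha]
    have hnn : spow x (n + n) = e := by
      rw [spow_add x n n hn0 hn0, ← hedef, he]
    -- x' = e x e = x^{n+1}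
    have hx' : e * x * e = spow x (n + 1) := by
      have h1 : e * x = spow x (n + 1) := by
        rw [spow_succ' x n hn0]
      rw [h1, hedef, ← spow_add x (n + 1) n (by omega) hn0]
      have h2 : n + 1 + n = n + n + 1 := by omega
      rw [h2, red 1 le_rfl]
    set x' := e * x * e with hx'def
    set y' := e * y * e with hy'def
    -- powers of x'
    have hpow : ∀ m, 1 ≤ m → spow x' m = spow x (n + m) := by
      intro m hm
      induction m with
      | zero => omega
      | succ m ih =>
        rcases Nat.eq_or_lt_of_le hm with hm' | hm'
        · rw [← hm', spow_one, hx']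
        · have hm1 : 1 ≤ m := by omega
          rw [spow_succ' x' m hm1, ih hm1, hx',
            ← spow_add x (n + m) (n + 1) (by omega) (by omega)]
          have h2 : n + m + (n + 1) = n + n + (m + 1) := by omega
          rw [h2, red (m + 1) (by omega)]
    have hx'n : spow x' n = e := by rw [hpow n hn0, hnn]
    have hx'nidem : spow x' n * spow x' n = spow x' n := by rw [hx'n, he]
    -- least idempotent power of x'
    have hex : ∃ m, 0 < m ∧ spow x' m * spow x' m = spow x' m := ⟨n, hn0, hx'nidem⟩
    set m' := Nat.find hex with hm'def
    obtain ⟨hm'0, hm'idem⟩ := Nat.find_spec hex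
    have hidem : IsIdemPow x' m' :=
      ⟨hm'0, hm'idem, fun m h1 h2 => Nat.find_min' hex ⟨h1, h2⟩⟩
    -- spow x' m' = e
    have he' : spow x' m' = e := by
      have h1 : spow x' (n * m') = spow x' m' := spow_mul_idem x' m' hm'0 hm'idem n hn0
      have h2 : spow x' (m' * n) = spow x' n := spow_mul_idem x' n hn0 hx'nidem m' hm'0
      rw [← h1, Nat.mul_comm, h2, hx'n]
    have hx'succ : spow x' (m' + 1) = spow x (n + 1) := by
      rw [spow_succ' x' m' hm'0, he', hedef]
      have h1 : spow x n * x' = spow x n * spow x (n + 1) := by rw [hx']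
      rw [h1, ← spow_add x n (n + 1) hn0 (by omega)]
      have h2 : n + (n + 1) = n + n + 1 := by omega
      rw [h2, red 1 le_rfl]
    have key := h e he x' y' ⟨x, rfl⟩ ⟨y, rfl⟩ m' hidem
    rw [he', hx'succ, hy'def] at key
    -- simplify both sides of key
    have hL : spow x (n + 1) * (e * y * e) * e = spow x (n + 1) * y * spow x n := by
      have h1 : spow x (n + 1) * e = spow x (n + 1) := by
        rw [hedef, ← spow_add x (n + 1) n (by omega) hn0]
        have h2 : n + 1 + n = n + n + 1 := by omega
        rw [h2, red 1 le_rfl]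
      calc spow x (n + 1) * (e * y * e) * e
          = (spow x (n + 1) * e) * y * (e * e) := by
            simp only [mul_assoc]
        _ = spow x (n + 1) * y * spow x n := by rw [h1, he, hedef]
    have hR : e * (e * y * e) * spow x (n + 1) = spow x n * y * spow x (n + 1) := by
      calc e * (e * y * e) * spow x (n + 1)
          = (e * e) * y * (e * spow x (n + 1)) := by simp only [mul_assoc]
        _ = spow x n * y * spow x (n + 1) := by
            rw [he, hedef, ← spow_add x n (n + 1) hn0 (by omega)]
            have h2 : n + (n + 1) = n + n + 1 := by omega
            rw [h2, red 1 le_rfl]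
    rw [hL, hR] at key
    exact key
end
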